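/- arXiv:1601.07114 — 5 statements merged into one kernel-verified Lean document; each statement's English description precedes it below -/
import Mathlib

section
/- Let A be a 2×2 real matrix equal to the Jordan block [[1,1],[0,1]], and let α be an irrational real number. Let Γ = ℤ(0,1) + ℤ(1,α) ⊂ ℝ². Then sup over negative integers j of the number of points of Γ inside A^j(B(0,r)) is infinite, for any r > 0 large enough that B(0,r) contains the unit square; in particular the lattice counting estimate #(Γ ∩ A^j B(0,r)) ≤ C·max(1,|det A|^j) fails for (A,Γ). -/
/-! Since `α` is irrational, for every `N` there are integers `q > 0` and `p` with
`0 < d := p - qα < 1/(N+1)` (Dirichlet's theorem, after a sign correction), so that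
`w = (-q, d) ∈ Γ`. For `n = ⌈q/d⌉` the shear `A^n = [[1,n],[0,1]]` maps `w` into `[0,d]²`,
hence maps `0, w, …, (N-1)w` into the unit square. Thus `A^(-n) B(0,r)` contains at least `N`
points of `Γ`, while `det A = 1`. -/

open Matrix Set

noncomputable section

/-- The points of the lattice `Γ = ℤ(0,1) + ℤ(1,α) ⊂ ℝ²`. -/
def latticeAlpha (α : ℝ) : Set (EuclideanSpace ℝ (Fin 2)) :=
  {x | ∃ m k : ℤ, x = (m : ℝ) • (WithLp.equiv 2 (Fin 2 → ℝ)).symm ![0, 1] +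
      (k : ℝ) • (WithLp.equiv 2 (Fin 2 → ℝ)).symm ![1, α]}

def shear (c : ℝ) : Matrix (Fin 2) (Fin 2) ℝ := !![1, c; 0, 1]

theorem shear_zero : shear 0 = 1 := by
  rw [shear, one_fin_two]

theorem shear_add (a b : ℝ) : shear (a + b) = shear a * shear b := by
  simp [shear, add_comm]

theorem det_shear (c : ℝ) : (shear c).det = 1 := by
  simp [shear, det_fin_two_of]

def shearHom : Multiplicative ℝ →* GL (Fin 2) ℝ where
  toFun c := ⟨shear c.toAdd, shear (-c.toAdd),
    by rw [← shear_add, add_neg_cancel, shear_zero],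
    by rw [← shear_add, neg_add_cancel, shear_zero]⟩
  map_one' := Units.ext shear_zero
  map_mul' a b := Units.ext (shear_add a.toAdd b.toAdd)

theorem coe_zpow_of_coe_eq_shear_one {A : GL (Fin 2) ℝ}
    (hA : (A : Matrix (Fin 2) (Fin 2) ℝ) = shear 1) (j : ℤ) :
    ((A ^ j : GL (Fin 2) ℝ) : Matrix (Fin 2) (Fin 2) ℝ) = shear j := by
  have : A = shearHom (Multiplicative.ofAdd 1) := Units.ext hA
  rw [this, ← map_zpow, ← ofAdd_zsmul, zsmul_one]
  rfl

theorem toEuclideanLin_shear_apply (c : ℝ) (y : EuclideanSpace ℝ (Fin 2)) :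
    toEuclideanLin (shear c) y = !₂[y 0 + c * y 1, y 1] := by
  ext i; fin_cases i <;> simp [shear, mulVec, dotProduct, Fin.sum_univ_two]

theorem mem_image_toEuclideanLin_shear_iff {c : ℝ} {s : Set (EuclideanSpace ℝ (Fin 2))}
    {x : EuclideanSpace ℝ (Fin 2)} :
    x ∈ toEuclideanLin (shear c) '' s ↔ toEuclideanLin (shear (-c)) x ∈ s := by
  rw [image_eq_preimage_of_inverse (f := toEuclideanLin (shear c))
    (g := toEuclideanLin (shear (-c)))]
  · rfl
  all_goals intro y; simp only [toEuclideanLin_shear_apply]; ext i; fin_cases i <;> simp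

theorem linearIndependent_latticeAlpha_generators (α : ℝ) :
    LinearIndependent ℝ ![!₂[(0 : ℝ), 1], !₂[1, α]] := by
  rw [LinearIndependent.pair_iff]
  intro a b h
  have h0 := congrArg (· 0) h
  have h1 := congrArg (· 1) h
  simp only [PiLp.add_apply, PiLp.smul_apply, cons_val_zero, cons_val_one, cons_val_fin_one,
    smul_eq_mul, mul_zero, mul_one, zero_add, PiLp.zero_apply] at h0 h1
  exact ⟨by simpa [h0] using h1, h0⟩

def latticeAlphaBasis (α : ℝ) : Module.Basis (Fin 2) ℝ (EuclideanSpace ℝ (Fin 2)) :=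
  basisOfLinearIndependentOfCardEqFinrank (linearIndependent_latticeAlpha_generators α) (by simp)

theorem latticeAlpha_eq_span (α : ℝ) :
    latticeAlpha α = Submodule.span ℤ (range (latticeAlphaBasis α)) := by
  ext x
  simp only [latticeAlphaBasis, coe_basisOfLinearIndependentOfCardEqFinrank,
    Matrix.range_cons_cons_empty, SetLike.mem_coe, Submodule.mem_span_pair, latticeAlpha,
    mem_ofPred_eq, Int.cast_smul_eq_zsmul]
  exact exists₂_congr fun m k => eq_comm

theorem latticeAlpha_inter_finite_of_isBounded (α : ℝ) {s : Set (EuclideanSpace ℝ (Fin 2))}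
    (hs : Bornology.IsBounded s) : (latticeAlpha α ∩ s).Finite := by
  rw [inter_comm, latticeAlpha_eq_span]
  exact ZSpan.setFinite_inter _ hs

theorem mem_latticeAlpha_of_apply {α : ℝ} (m k : ℤ) {x : EuclideanSpace ℝ (Fin 2)}
    (h0 : x 0 = k) (h1 : x 1 = m + k * α) : x ∈ latticeAlpha α :=
  ⟨m, k, by ext i; fin_cases i <;> simp [h0, h1]⟩

theorem exists_nat_mul_mem_Ico_of_lt_one {β : ℝ} (h0 : 0 < β) (h1 : β < 1) :
    ∃ s : ℕ, 0 < s ∧ s * β ∈ Ico (1 - β) 1 := by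
  have hinv : 0 < β⁻¹ - 1 := sub_pos.2 (one_lt_inv₀ h0 |>.2 h1)
  refine ⟨⌈β⁻¹ - 1⌉₊, Nat.ceil_pos.2 hinv, ?_, ?_⟩
  · have := mul_le_mul_of_nonneg_right (Nat.le_ceil (β⁻¹ - 1)) h0.le
    rwa [sub_mul, inv_mul_cancel₀ h0.ne', one_mul] at this
  · have := mul_lt_mul_of_pos_right (Nat.ceil_lt_add_one hinv.le) h0
    rwa [sub_add_cancel, inv_mul_cancel₀ h0.ne'] at this

theorem Irrational.exists_int_sub_mul_mem_Ioo {α ε : ℝ} (hα : Irrational α) (hε : 0 < ε) :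
    ∃ q p : ℤ, 0 < q ∧ p - q * α ∈ Ioo 0 ε := by
  obtain ⟨n, hn⟩ := exists_nat_one_div_lt hε
  obtain ⟨j, k, hk, -, hjk⟩ := Real.exists_int_int_abs_mul_sub_le α n.succ_pos
  set β := k * α - j
  have hβε : |β| < ε := hjk.trans_lt <| lt_of_le_of_lt (by gcongr; simp) hn
  have hβ1 : |β| < 1 := hjk.trans_lt <| by
    rw [div_lt_one (by positivity)]; push_cast; linarith [n.cast_nonneg (α := ℝ)]
  have hβ : β ≠ 0 := sub_ne_zero.2 <| (hα.intCast_mul hk.ne').ne_int j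
  rcases hβ.lt_or_gt with hneg | hpos
  · exact ⟨k, j, hk, by linarith, by linarith [neg_abs_le β]⟩
  -- a positive `β` is turned negative by passing to the multiple of `β` just below `1`
  obtain ⟨s, hs, hsβ1, hsβ2⟩ := exists_nat_mul_mem_Ico_of_lt_one hpos (lt_of_abs_lt hβ1)
  refine ⟨s * k, s * j + 1, by positivity, ?_, ?_⟩ <;> push_cast
  · linarith [show (s : ℝ) * β = s * k * α - s * j by ring]
  · linarith [show (s : ℝ) * β = s * k * α - s * j by ring, le_abs_self β]

theorem le_ncard_latticeAlpha_inter_image_shear_ball {α r : ℝ} (hα : Irrational α)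
    (hsq : ∀ x : EuclideanSpace ℝ (Fin 2), (∀ i, x i ∈ Icc (0 : ℝ) 1) →
      x ∈ Metric.ball (0 : EuclideanSpace ℝ (Fin 2)) r) (N : ℕ) :
    ∃ n : ℤ, 0 < n ∧
      N ≤ (latticeAlpha α ∩ toEuclideanLin (shear (-n)) '' Metric.ball 0 r).ncard := by
  obtain ⟨q, p, hq, hd0, hdN⟩ :=
    hα.exists_int_sub_mul_mem_Ioo (ε := 1 / (N + 1)) (by positivity)
  set d := p - q * α
  obtain ⟨n, hn0, hnd⟩ : ∃ n : ℤ, 0 ≤ -q + n * d ∧ -q + n * d < d := by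
    obtain ⟨n, hn, -⟩ := existsUnique_add_zsmul_mem_Ico hd0 (-q : ℝ) 0
    rw [zero_add, zsmul_eq_mul] at hn
    exact ⟨n, hn⟩
  have hn : 0 < n := by
    have : (0 : ℝ) < n * d := by linarith [(Int.cast_pos (R := ℝ)).2 hq]
    exact_mod_cast pos_of_mul_pos_left this hd0.le
  let w : EuclideanSpace ℝ (Fin 2) := !₂[-q, d]
  have hmem : ∀ s ∈ Iio N,
      (s : ℝ) • w ∈ latticeAlpha α ∩ toEuclideanLin (shear (-n)) '' Metric.ball 0 r := by
    intro s hs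
    have hs0 : (0 : ℝ) ≤ s := s.cast_nonneg
    have hsd : s * d ≤ 1 := by
      have hsN : (s : ℝ) ≤ N + 1 := by exact_mod_cast (mem_Iio.1 hs).le.trans N.le_succ
      rw [lt_div_iff₀ (by positivity)] at hdN
      nlinarith
    refine ⟨mem_latticeAlpha_of_apply (s * p) (-(s * q)) (by simp [w]) (by simp [w, d]; ring), ?_⟩
    rw [mem_image_toEuclideanLin_shear_iff, neg_neg, map_smul, toEuclideanLin_shear_apply]
    apply hsq
    intro i; fin_cases i
    · exact ⟨by simpa [w] using mul_nonneg hs0 hn0, by simp [w]; nlinarith⟩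
    · exact ⟨by simpa [w] using mul_nonneg hs0 hd0.le, by simpa [w] using hsd⟩
  refine ⟨n, hn, ?_⟩
  calc N = (Iio N).ncard := (ncard_Iio_nat N).symm
    _ ≤ _ := ncard_le_ncard_of_injOn _ hmem ?_ ?_
  · exact (smul_left_injective ℝ (by simp [w, hd0.ne'])).comp Nat.cast_injective |>.injOn
  · exact ((toEuclideanLin (shear (-n))).toContinuousLinearMap.lipschitz.isBounded_image
      Metric.isBounded_ball) |> latticeAlpha_inter_finite_of_isBounded α

theorem jordan_block_fails_lattice_counting_general
    (A : Matrix.GeneralLinearGroup (Fin 2) ℝ)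
    (hA : (A : Matrix (Fin 2) (Fin 2) ℝ) = !![1, 1; 0, 1])
    (α : ℝ) (hα : Irrational α) (r : ℝ)
    (hsq : ∀ x : EuclideanSpace ℝ (Fin 2), (∀ i, x i ∈ Set.Icc (0:ℝ) 1) →
      x ∈ Metric.ball (0 : EuclideanSpace ℝ (Fin 2)) r) :
    (∀ N : ℕ, ∃ j : ℤ, j < 0 ∧
      N ≤ (latticeAlpha α ∩
        Matrix.toEuclideanLin ((A ^ j : Matrix.GeneralLinearGroup (Fin 2) ℝ) :
          Matrix (Fin 2) (Fin 2) ℝ) '' Metric.ball 0 r).ncard) ∧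
    ¬ ∃ C : ℝ, 0 < C ∧ ∀ j : ℤ,
      ((latticeAlpha α ∩
        Matrix.toEuclideanLin ((A ^ j : Matrix.GeneralLinearGroup (Fin 2) ℝ) :
          Matrix (Fin 2) (Fin 2) ℝ) '' Metric.ball 0 r).ncard : ℝ) ≤
        C * max 1 (|Matrix.det (A : Matrix (Fin 2) (Fin 2) ℝ)| ^ j) := by
  have hpow := coe_zpow_of_coe_eq_shear_one hA
  have hunbounded : ∀ N : ℕ, ∃ j : ℤ, j < 0 ∧ N ≤ (latticeAlpha α ∩ toEuclideanLin
      ((A ^ j : GL (Fin 2) ℝ) : Matrix (Fin 2) (Fin 2) ℝ) '' Metric.ball 0 r).ncard := by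
    intro N
    obtain ⟨n, hn, hN⟩ := le_ncard_latticeAlpha_inter_image_shear_ball hα hsq N
    exact ⟨-n, neg_neg_of_pos hn, by rwa [hpow, Int.cast_neg]⟩
  refine ⟨hunbounded, fun ⟨C, _, hC⟩ => ?_⟩
  obtain ⟨j, -, hj⟩ := hunbounded (⌈C⌉₊ + 1)
  have hdet : (A : Matrix (Fin 2) (Fin 2) ℝ).det = 1 := hA ▸ det_shear 1
  have hCj := hC j
  rw [hdet, abs_one, _root_.one_zpow, max_self, mul_one] at hCj
  have : ((⌈C⌉₊ + 1 : ℕ) : ℝ) ≤ C := (Nat.cast_le.2 hj).trans hCj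
  push_cast at this
  linarith [Nat.le_ceil C]

/-- Let `A` be (the invertible matrix given by) the Jordan block `[[1,1],[0,1]]` and
`α` irrational, `Γ = ℤ(0,1) + ℤ(1,α)`. If `r > 0` is large enough that `B(0,r)` contains
the unit square, then `sup_{j<0} #(Γ ∩ A^j(B(0,r))) = ∞`; in particular the lattice
counting estimate `#(Γ ∩ A^j B(0,r)) ≤ C max(1,|det A|^j)` fails for `(A,Γ)`. -/
theorem jordan_block_fails_lattice_counting
    (A : Matrix.GeneralLinearGroup (Fin 2) ℝ)
    (hA : (A : Matrix (Fin 2) (Fin 2) ℝ) = !![1, 1; 0, 1])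
    (α : ℝ) (hα : Irrational α) (r : ℝ) (hr : 0 < r)
    (hsq : ∀ x : EuclideanSpace ℝ (Fin 2), (∀ i, x i ∈ Set.Icc (0:ℝ) 1) →
      x ∈ Metric.ball (0 : EuclideanSpace ℝ (Fin 2)) r) :
    (∀ N : ℕ, ∃ j : ℤ, j < 0 ∧
      N ≤ (latticeAlpha α ∩
        Matrix.toEuclideanLin ((A ^ j : Matrix.GeneralLinearGroup (Fin 2) ℝ) :
          Matrix (Fin 2) (Fin 2) ℝ) '' Metric.ball 0 r).ncard) ∧
    ¬ ∃ C : ℝ, 0 < C ∧ ∀ j : ℤ,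
      ((latticeAlpha α ∩
        Matrix.toEuclideanLin ((A ^ j : Matrix.GeneralLinearGroup (Fin 2) ℝ) :
          Matrix (Fin 2) (Fin 2) ℝ) '' Metric.ball 0 r).ncard : ℝ) ≤
        C * max 1 (|Matrix.det (A : Matrix (Fin 2) (Fin 2) ℝ)| ^ j) :=
  jordan_block_fails_lattice_counting_general A hA α hα r hsq

end
end

section
/- Let B ∈ GL(n,ℝ) be an orthogonal matrix and ψ ∈ L²(ℝⁿ). Then the Calderón formula ∑_{j∈ℤ} |ψ̂(B^{-j}ξ)|² = 1 for a.e. ξ ∈ ℝⁿ cannot hold. -/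
/-! Since `B` is orthogonal, every `B⁻ʲ` is a linear isometry of `ℝⁿ`, so it preserves Lebesgue
measure and the unit ball `E`. Integrating the Calderón sum over `E` therefore gives
`vol E = ∑ⱼ ∫_E |ψ̂|²`, a sum of infinitely many equal terms, which is `0` or `∞`;
but `0 < vol E < ∞`. -/

open Matrix Set MeasureTheory

noncomputable section

def glAct {n : ℕ} (A : Matrix.GeneralLinearGroup (Fin n) ℝ) :
    EuclideanSpace ℝ (Fin n) →ₗ[ℝ] EuclideanSpace ℝ (Fin n) :=
  Matrix.toEuclideanLin (A : Matrix (Fin n) (Fin n) ℝ)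

open scoped ENNReal

namespace MeasureTheory

variable {α ι : Type*} [MeasurableSpace α] {μ : Measure α} {T : ι → α → α} {s : Set α}
  {f : α → ℝ≥0∞}

theorem setLIntegral_tsum_comp_of_preimage_eq [Countable ι]
    (hT : ∀ i, MeasurePreserving (T i) μ μ) (hTe : ∀ i, MeasurableEmbedding (T i))
    (hs : ∀ i, T i ⁻¹' s = s) (hf : AEMeasurable f μ) :
    ∫⁻ x in s, ∑' i, f (T i x) ∂μ = ∑' _ : ι, ∫⁻ x in s, f x ∂μ := by
  have hmeas : ∀ i, AEMeasurable (fun x ↦ f (T i x)) (μ.restrict s) := fun i ↦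
    (hf.comp_quasiMeasurePreserving (hT i).quasiMeasurePreserving).restrict
  rw [lintegral_tsum hmeas]
  refine tsum_congr fun i ↦ ?_
  conv_lhs => rw [← hs i]
  exact (hT i).setLIntegral_comp_preimage_emb (hTe i) f s

theorem not_ae_tsum_comp_eq_one [Countable ι] [Infinite ι]
    (hT : ∀ i, MeasurePreserving (T i) μ μ) (hTe : ∀ i, MeasurableEmbedding (T i))
    (hs : ∀ i, T i ⁻¹' s = s) (hs₀ : μ s ≠ 0) (hs_top : μ s ≠ ∞) (hf : AEMeasurable f μ) :
    ¬ ∀ᵐ x ∂μ, ∑' i, f (T i x) = 1 := by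
  intro h
  have hμs : μ s = ∑' _ : ι, ∫⁻ x in s, f x ∂μ := by
    rw [← setLIntegral_tsum_comp_of_preimage_eq hT hTe hs hf, ← setLIntegral_one]
    exact lintegral_congr_ae (ae_restrict_of_ae (h.mono fun x hx ↦ hx.symm))
  rcases eq_or_ne (∫⁻ x in s, f x ∂μ) 0 with h₀ | h₀
  · exact hs₀ (by rw [hμs, h₀, tsum_zero])
  · exact hs_top (by rw [hμs, ENNReal.tsum_const_eq_top_of_ne_zero h₀])

end MeasureTheory

theorem ENNReal.tsum_ofReal_eq_one {ι : Type*} {f : ι → ℝ} (hf : ∀ i, 0 ≤ f i)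
    (h : ∑' i, f i = 1) : ∑' i, ENNReal.ofReal (f i) = 1 := by
  have hsum : Summable f := by
    by_contra hns
    rw [tsum_eq_zero_of_not_summable hns] at h
    exact zero_ne_one h
  rw [← ENNReal.ofReal_tsum_of_nonneg hf hsum, h, ENNReal.ofReal_one]

theorem Units.val_zpow_mem_unitary {R : Type*} [Monoid R] [StarMul R] {u : Rˣ}
    (hu : (u : R) ∈ unitary R) (j : ℤ) : ((u ^ j : Rˣ) : R) ∈ unitary R := by
  have : u = Unitary.toUnits ⟨(u : R), hu⟩ := Units.ext rfl
  rw [this, ← map_zpow]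
  exact (⟨(u : R), hu⟩ ^ j : unitary R).property

def glActIsometry {n : ℕ} (A : GL (Fin n) ℝ) (hA : (A : Matrix (Fin n) (Fin n) ℝ) ∈ unitary _) :
    EuclideanSpace ℝ (Fin n) ≃ₗᵢ[ℝ] EuclideanSpace ℝ (Fin n) :=
  Unitary.linearIsometryEquiv ⟨toEuclideanCLM (𝕜 := ℝ) A, Unitary.map_mem _ hA⟩

theorem coe_glActIsometry {n : ℕ} (A : GL (Fin n) ℝ)
    (hA : (A : Matrix (Fin n) (Fin n) ℝ) ∈ unitary _) : ⇑(glActIsometry A hA) = glAct A :=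
  rfl

/-- If `B` is an orthogonal matrix, then the Calderón formula
`∑_{j∈ℤ} |ψ̂(B^{-j}ξ)|² = 1` for a.e. `ξ` cannot hold for any `ψ ∈ L²(ℝⁿ)`.
(By Plancherel, `ψ ∈ L²` corresponds exactly to `ψ̂ =: g ∈ L²`, so the statement
is phrased in terms of the Fourier transform `g` of `ψ`.) -/
theorem calderon_fails_for_orthogonal {n : ℕ}
    (B : Matrix.GeneralLinearGroup (Fin n) ℝ)
    (hB : (B : Matrix (Fin n) (Fin n) ℝ)ᵀ * (B : Matrix (Fin n) (Fin n) ℝ) = 1)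
    (g : EuclideanSpace ℝ (Fin n) → ℂ) (hg : MemLp g 2 (volume : Measure (EuclideanSpace ℝ (Fin n)))) :
    ¬ (∀ᵐ ξ : EuclideanSpace ℝ (Fin n) ∂(volume : Measure (EuclideanSpace ℝ (Fin n))),
        ∑' j : ℤ, ‖g (glAct (B ^ (-j)) ξ)‖ ^ 2 = 1) := by
  have hB' : (B : Matrix (Fin n) (Fin n) ℝ) ∈ unitary _ :=
    (mem_orthogonalGroup_iff' (Fin n) ℝ).mpr hB
  let e : ℤ → EuclideanSpace ℝ (Fin n) ≃ₗᵢ[ℝ] EuclideanSpace ℝ (Fin n) := fun j ↦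
    glActIsometry (B ^ (-j)) (Units.val_zpow_mem_unitary hB' _)
  intro h
  refine not_ae_tsum_comp_eq_one (T := fun j ↦ e j) (s := Metric.ball 0 1)
    (f := fun ξ ↦ ENNReal.ofReal (‖g ξ‖ ^ 2)) (fun j ↦ (e j).measurePreserving)
    (fun j ↦ (e j).toHomeomorph.measurableEmbedding) (fun j ↦ by simp [(e j).preimage_ball])
    (Metric.measure_ball_pos _ _ one_pos).ne' measure_ball_lt_top.ne
    (hg.aestronglyMeasurable.aemeasurable.norm.pow_const 2).ennreal_ofReal ?_
  filter_upwards [h] with ξ hξ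
  simp only [e, coe_glActIsometry]
  exact ENNReal.tsum_ofReal_eq_one (fun _ ↦ by positivity) hξ

end
end

section
/- Let B ∈ GL(n,ℝ) be not orthogonal with |det B| = 1, and suppose S ⊂ ℝⁿ is a multiplicative tiling set for B. If there exists ψ ∈ L²(ℝⁿ) with ∑_{j∈ℤ}|ψ̂(B^{-j}ξ)|² = 1 a.e., then the Lebesgue measure of S equals ‖ψ‖²; in particular S has finite measure. -/
/-!
Since `|det B| = 1`, every `B ^ j` preserves Lebesgue measure. Integrating the Calderón identity
`∑ⱼ |g (B ^ j ξ)|² = 1` over `S` and substituting `ξ ↦ B ^ j ξ` in the `j`-th term gives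
`|S| = ∑ⱼ ∫_{B ^ j S} |g|²`, and since the sets `B ^ j S` tile `ℝⁿ` up to null sets this is `∫ |g|²`.
-/

open Matrix Set MeasureTheory

noncomputable section

def IsMultTiling {n : ℕ} (B : Matrix.GeneralLinearGroup (Fin n) ℝ)
    (S : Set (EuclideanSpace ℝ (Fin n))) : Prop :=
  volume (Set.univ \ ⋃ j : ℤ, glAct (B ^ j) '' S) = 0 ∧
  ∀ i j : ℤ, i ≠ j → volume ((glAct (B ^ i) '' S) ∩ (glAct (B ^ j) '' S)) = 0

open scoped ENNReal

theorem Matrix.det_toEuclideanLin {n : ℕ} (M : Matrix (Fin n) (Fin n) ℝ) :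
    LinearMap.det (toEuclideanLin M) = M.det := by
  let e : (Fin n → ℝ) ≃ₗ[ℝ] EuclideanSpace ℝ (Fin n) := (WithLp.linearEquiv 2 ℝ (Fin n → ℝ)).symm
  change LinearMap.det ((e : (Fin n → ℝ) →ₗ[ℝ] _) ∘ₗ toLin' M ∘ₗ
    (e.symm : EuclideanSpace ℝ (Fin n) →ₗ[ℝ] (Fin n → ℝ))) = M.det
  rw [LinearMap.det_conj, LinearMap.det_toLin']

theorem abs_det_zpow_eq_one {n : ℕ} {B : GL (Fin n) ℝ}
    (hdet : |det (B : Matrix (Fin n) (Fin n) ℝ)| = 1) (j : ℤ) :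
    |det ((B ^ j : GL (Fin n) ℝ) : Matrix (Fin n) (Fin n) ℝ)| = 1 := by
  rw [← GeneralLinearGroup.val_det_apply, map_zpow, Units.val_zpow_eq_zpow_val, abs_zpow,
    GeneralLinearGroup.val_det_apply, hdet, _root_.one_zpow]

theorem det_glAct {n : ℕ} (A : GL (Fin n) ℝ) :
    LinearMap.det (glAct A) = det (A : Matrix (Fin n) (Fin n) ℝ) :=
  det_toEuclideanLin _

theorem measurableEmbedding_glAct {n : ℕ} (A : GL (Fin n) ℝ) :
    MeasurableEmbedding (glAct A) :=
  ((glAct A).equivOfDetNeZero (by rw [det_glAct]; exact A.det_ne_zero)).toContinuousLinearEquiv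
    |>.toHomeomorph.measurableEmbedding

theorem measurePreserving_glAct {n : ℕ} (μ : Measure (EuclideanSpace ℝ (Fin n)))
    [μ.IsAddHaarMeasure] {A : GL (Fin n) ℝ} (hA : |det (A : Matrix (Fin n) (Fin n) ℝ)| = 1) :
    MeasurePreserving (glAct A) μ μ := by
  refine ⟨(measurableEmbedding_glAct A).measurable, ?_⟩
  rw [Measure.map_linearMap_addHaar_eq_smul_addHaar _ (by rw [det_glAct]; exact A.det_ne_zero),
    det_glAct, abs_inv, hA, inv_one, ENNReal.ofReal_one, one_smul]

section Tiling

variable {α ι : Type*} [MeasurableSpace α] [Countable ι] {μ : Measure α} {T : ι → α → α}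
  {S : Set α}

theorem setLIntegral_tsum_comp_eq_lintegral (hT : ∀ i, MeasurePreserving (T i) μ μ)
    (hTe : ∀ i, MeasurableEmbedding (T i)) (hS : MeasurableSet S)
    (hcover : μ (⋃ i, T i '' S)ᶜ = 0)
    (hdisj : Pairwise fun i j => AEDisjoint μ (T i '' S) (T j '' S))
    {F : α → ℝ≥0∞} (hF : AEMeasurable F μ) :
    ∫⁻ x in S, ∑' i : ι, F (T i x) ∂μ = ∫⁻ x, F x ∂μ := calc
  _ = ∑' i, ∫⁻ x in S, F (T i x) ∂μ :=
    lintegral_tsum fun i => (hF.comp_quasiMeasurePreserving (hT i).quasiMeasurePreserving).restrict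
  _ = ∑' i, ∫⁻ x in T i '' S, F x ∂μ :=
    tsum_congr fun i => (hT i).setLIntegral_comp_emb (hTe i) F S
  _ = ∫⁻ x in ⋃ i, T i '' S, F x ∂μ :=
    (lintegral_iUnion₀ (fun i => ((hTe i).measurableSet_image.2 hS).nullMeasurableSet)
      hdisj F).symm
  _ = ∫⁻ x, F x ∂μ := by rw [setLIntegral_congr (ae_eq_univ.2 hcover), setLIntegral_univ]

theorem measure_eq_lintegral_of_tsum_comp_eq_one (hT : ∀ i, MeasurePreserving (T i) μ μ)
    (hTe : ∀ i, MeasurableEmbedding (T i)) (hS : MeasurableSet S)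
    (hcover : μ (⋃ i, T i '' S)ᶜ = 0)
    (hdisj : Pairwise fun i j => AEDisjoint μ (T i '' S) (T j '' S))
    {F : α → ℝ≥0∞} (hF : AEMeasurable F μ) (hsum : ∀ᵐ x ∂μ, ∑' i : ι, F (T i x) = 1) :
    μ S = ∫⁻ x, F x ∂μ := calc
  μ S = ∫⁻ x in S, ∑' i : ι, F (T i x) ∂μ := by
    rw [setLIntegral_congr_fun_ae hS (hsum.mono fun x hx _ => hx), setLIntegral_one]
  _ = ∫⁻ x, F x ∂μ := setLIntegral_tsum_comp_eq_lintegral hT hTe hS hcover hdisj hF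

end Tiling

theorem tsum_enorm_sq_eq_one {ι E : Type*} [NormedAddCommGroup E] {f : ι → E}
    (h : ∑' i, ‖f i‖ ^ 2 = 1) : ∑' i, ‖f i‖ₑ ^ 2 = 1 := by
  have hf : Summable fun i => ‖f i‖ ^ 2 := by
    by_contra hf
    rw [tsum_eq_zero_of_not_summable hf] at h
    exact zero_ne_one h
  simp_rw [← ofReal_norm, ← ENNReal.ofReal_pow (norm_nonneg _)]
  rw [← ENNReal.ofReal_tsum_of_nonneg (fun i => by positivity) hf, h, ENNReal.ofReal_one]

theorem MeasureTheory.MemLp.lintegral_enorm_sq_eq_ofReal_integral {α E : Type*}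
    [MeasurableSpace α] {μ : Measure α} [NormedAddCommGroup E] {g : α → E} (hg : MemLp g 2 μ) :
    ∫⁻ x, ‖g x‖ₑ ^ 2 ∂μ = ENNReal.ofReal (∫ x, ‖g x‖ ^ 2 ∂μ) := by
  have hint : Integrable (fun x => ‖g x‖ ^ 2) μ := hg.integrable_norm_pow two_ne_zero
  calc ∫⁻ x, ‖g x‖ₑ ^ 2 ∂μ = ∫⁻ x, ‖‖g x‖ ^ 2‖ₑ ∂μ := by simp only [enorm_pow, enorm_norm]
    _ = ENNReal.ofReal (∫ x, ‖‖g x‖ ^ 2‖ ∂μ) := (ofReal_integral_norm_eq_lintegral_enorm hint).symm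
    _ = ENNReal.ofReal (∫ x, ‖g x‖ ^ 2 ∂μ) := by simp only [norm_pow, norm_norm]

theorem measure_tiling_eq_norm_sq_general {n : ℕ}
    (B : Matrix.GeneralLinearGroup (Fin n) ℝ)
    (hdet : |Matrix.det (B : Matrix (Fin n) (Fin n) ℝ)| = 1)
    (S : Set (EuclideanSpace ℝ (Fin n))) (hSm : MeasurableSet S)
    (htile : IsMultTiling B S)
    (g : EuclideanSpace ℝ (Fin n) → ℂ)
    (hg : MemLp g 2 (volume : Measure (EuclideanSpace ℝ (Fin n))))
    (hcald : ∀ᵐ ξ : EuclideanSpace ℝ (Fin n) ∂(volume : Measure (EuclideanSpace ℝ (Fin n))),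
      ∑' j : ℤ, ‖g (glAct (B ^ (-j)) ξ)‖ ^ 2 = 1) :
    volume S = ENNReal.ofReal (∫ ξ : EuclideanSpace ℝ (Fin n), ‖g ξ‖ ^ 2) ∧
      volume S < ⊤ := by
  have hsum : ∀ᵐ ξ, ∑' j : ℤ, ‖g (glAct (B ^ j) ξ)‖ₑ ^ 2 = 1 := by
    filter_upwards [hcald] with ξ hξ
    rw [← (Equiv.neg ℤ).tsum_eq]
    exact tsum_enorm_sq_eq_one hξ
  have hS : volume S = ∫⁻ ξ, ‖g ξ‖ₑ ^ 2 :=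
    measure_eq_lintegral_of_tsum_comp_eq_one
      (fun j => measurePreserving_glAct volume (abs_det_zpow_eq_one hdet j))
      (fun j => measurableEmbedding_glAct _) hSm (by rw [compl_eq_univ_sdiff]; exact htile.1)
      htile.2 (hg.aestronglyMeasurable.enorm.pow_const 2) hsum
  rw [hS, hg.lintegral_enorm_sq_eq_ofReal_integral]
  exact ⟨rfl, ENNReal.ofReal_lt_top⟩

/-- Let `B` be non-orthogonal with `|det B| = 1` and `S` a multiplicative tiling set for
`B`. If some `ψ ∈ L²` satisfies `∑_{j∈ℤ}|ψ̂(B^{-j}ξ)|² = 1` a.e., then `|S| = ‖ψ‖²`;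
in particular `S` has finite measure. (By Plancherel, `ψ̂ =: g` ranges exactly over `L²`
and `‖ψ‖² = ‖g‖² = ∫ |g|²`.) -/
theorem measure_tiling_eq_norm_sq {n : ℕ}
    (B : Matrix.GeneralLinearGroup (Fin n) ℝ)
    (horth : (B : Matrix (Fin n) (Fin n) ℝ)ᵀ * (B : Matrix (Fin n) (Fin n) ℝ) ≠ 1)
    (hdet : |Matrix.det (B : Matrix (Fin n) (Fin n) ℝ)| = 1)
    (S : Set (EuclideanSpace ℝ (Fin n))) (hSm : MeasurableSet S)
    (htile : IsMultTiling B S)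
    (g : EuclideanSpace ℝ (Fin n) → ℂ)
    (hg : MemLp g 2 (volume : Measure (EuclideanSpace ℝ (Fin n))))
    (hcald : ∀ᵐ ξ : EuclideanSpace ℝ (Fin n) ∂(volume : Measure (EuclideanSpace ℝ (Fin n))),
      ∑' j : ℤ, ‖g (glAct (B ^ (-j)) ξ)‖ ^ 2 = 1) :
    volume S = ENNReal.ofReal (∫ ξ : EuclideanSpace ℝ (Fin n), ‖g ξ‖ ^ 2) ∧
      volume S < ⊤ :=
  measure_tiling_eq_norm_sq_general B hdet S hSm htile g hg hcald

end
end

section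
/- Let B ∈ GL(n,ℝ) with |det B| > 1, let F be the real span of generalized eigenspaces of B with eigenvalues of modulus > 1, E the complementary B-invariant subspace (eigenvalues of modulus ≤ 1), and T ⊂ Q(p,q,s) = {x_E + x_F : |x_E| < p, s < |x_F| < q} for some p,q,s > 0. Then there exists K ∈ ℕ such that for every ξ ∈ ℝⁿ, the number of integers j with B^{-j}ξ ∈ T is at most K (i.e., every B-orbit {B^j ξ}_{j∈ℤ} hits Q(p,q,s) at most K times). -/
open Matrix Set

noncomputable section

def genEigSpanReal {n : ℕ} (B : Matrix (Fin n) (Fin n) ℝ) (pred : ℂ → Prop) :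
    Submodule ℝ (EuclideanSpace ℝ (Fin n)) :=
  Submodule.span ℝ {x : EuclideanSpace ℝ (Fin n) |
    ∃ μ : ℂ, pred μ ∧
      ∃ v ∈ Module.End.maxGenEigenspace (Matrix.toLin' (B.map ((↑) : ℝ → ℂ))) μ,
        (∀ i, x i = (v i).re) ∨ (∀ i, x i = (v i).im)}

def Qset {n : ℕ} (E F : Submodule ℝ (EuclideanSpace ℝ (Fin n))) (p q s : ℝ) :
    Set (EuclideanSpace ℝ (Fin n)) :=
  {x | ∃ xE ∈ E, ∃ xF ∈ F, x = xE + xF ∧ ‖xE‖ < p ∧ s < ‖xF‖ ∧ ‖xF‖ < q}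

open Filter Topology

/-!
On `F` every eigenvalue of `B⁻¹` lies in the open unit disc, so the powers `B⁻ᵐ` tend to zero
on `F`, and, `F` being finite-dimensional, uniformly on its bounded sets: for `m ≥ N` they map
vectors of `F` of norm `< q` to vectors of norm `< s`. Since `E` and `F` are `B`-invariant and
intersect trivially, the `F`-component of `B⁻ʲ⁻ᵐ ξ` is `B⁻ᵐ` applied to that of `B⁻ʲ ξ`, so two
visits of the orbit to `Q(p,q,s)` are fewer than `N` steps apart and there are at most `2N` of
them. The decay is proved on complex generalized eigenvectors, by induction on the nilpotency
order, and carried over to `F` by taking real parts. That `E ∩ F = 0` is seen after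
complexifying: as the eigenvalue conditions are invariant under conjugation, a real vector of
either space lies in the corresponding sum of complex generalized eigenspaces, and these two sums
are independent.
-/

theorem tendsto_zero_of_le_mul_add {r : ℝ} (hr₀ : 0 ≤ r) (hr₁ : r < 1) {u b : ℕ → ℝ}
    (hu : ∀ m, 0 ≤ u m) (hrec : ∀ m, u (m + 1) ≤ r * u m + b m)
    (hb : Tendsto b atTop (𝓝 0)) : Tendsto u atTop (𝓝 0) := by
  refine tendsto_order.2 ⟨fun a ha => .of_forall fun m => ha.trans_le (hu m), fun a ha => ?_⟩
  obtain ⟨M, hM⟩ := eventually_atTop.1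
    (hb.eventually (gt_mem_nhds (mul_pos (sub_pos.2 hr₁) (half_pos ha))))
  have key : ∀ k, u (M + k) ≤ r ^ k * u M + a / 2 := by
    intro k
    induction k with
    | zero => simp; linarith
    | succ k ih =>
      calc u (M + (k + 1)) ≤ r * u (M + k) + b (M + k) := hrec (M + k)
        _ ≤ r * (r ^ k * u M + a / 2) + (1 - r) * (a / 2) := by
          gcongr; exact (hM _ (Nat.le_add_right M k)).le
        _ = r ^ (k + 1) * u M + a / 2 := by ring
  have hpow : Tendsto (fun k => r ^ k * u M) atTop (𝓝 0) := by
    simpa using (tendsto_pow_atTop_nhds_zero_of_lt_one hr₀ hr₁).mul_const (u M)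
  obtain ⟨K, hK⟩ := eventually_atTop.1 (hpow.eventually (gt_mem_nhds (half_pos ha)))
  refine eventually_atTop.2 ⟨M + K, fun m hm => ?_⟩
  obtain ⟨k, rfl⟩ := Nat.exists_eq_add_of_le (le_trans (Nat.le_add_right M K) hm)
  linarith [key k, hK k (by omega)]

namespace Module.End

variable {𝕜 V : Type*} [NormedField 𝕜] [SeminormedAddCommGroup V] [NormedSpace 𝕜 V]

def stableSubmodule (g : Module.End 𝕜 V) : Submodule 𝕜 V where
  carrier := {v | Tendsto (fun m => (g ^ m) v) atTop (𝓝 0)}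
  add_mem' {v w} hv hw := by simpa using hv.add hw
  zero_mem' := by simpa using tendsto_const_nhds
  smul_mem' c v hv := by simpa using hv.const_smul c

theorem maxGenEigenspace_le_stableSubmodule (g : Module.End 𝕜 V) {c : 𝕜} (hc : ‖c‖ < 1) :
    g.maxGenEigenspace c ≤ g.stableSubmodule := by
  intro v hv
  obtain ⟨k, hk⟩ := (mem_maxGenEigenspace g c v).1 hv
  clear hv
  induction k generalizing v with
  | zero => simp_all
  | succ k ih =>
    set w := (g - c • 1) v
    have hw : Tendsto (fun m => (g ^ m) w) atTop (𝓝 0) :=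
      ih (v := w) (by rwa [pow_succ, mul_apply] at hk)
    have hstep : ∀ m, (g ^ (m + 1)) v = c • (g ^ m) v + (g ^ m) w := by
      intro m
      rw [pow_succ, mul_apply, ← map_smul, ← map_add]
      simp [w]
    refine tendsto_zero_iff_norm_tendsto_zero.2 <|
      tendsto_zero_of_le_mul_add (norm_nonneg c) hc (fun _ => norm_nonneg _) (fun m => ?_)
        (tendsto_zero_iff_norm_tendsto_zero.1 hw)
    rw [hstep, ← norm_smul]
    exact norm_add_le _ _

end Module.End

theorem Module.End.mem_stableSubmodule_of_semiconj {𝕜 𝕜' V W : Type*} [NormedField 𝕜]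
    [SeminormedAddCommGroup V] [NormedSpace 𝕜 V] [NormedField 𝕜'] [SeminormedAddCommGroup W]
    [NormedSpace 𝕜' W] {g : Module.End 𝕜 V} {h : Module.End 𝕜' W} {π : V → W}
    (hπ : Continuous π) (hπ₀ : π 0 = 0) (hgh : Function.Semiconj π g h) {v : V}
    (hv : v ∈ g.stableSubmodule) : π v ∈ h.stableSubmodule := by
  have := (hπ.tendsto 0).comp hv
  rw [hπ₀] at this
  refine this.congr fun m => ?_
  simp only [Function.comp_apply, Module.End.coe_pow, (hgh.iterate_right m) v]

theorem Module.End.maxGenEigenspace_le_maxGenEigenspace_inv {K V : Type*} [Field K]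
    [AddCommGroup V] [Module K V] {f g : Module.End K V} (hfg : f * g = 1) (hgf : g * f = 1)
    {c : K} (hc : c ≠ 0) : f.maxGenEigenspace c ≤ g.maxGenEigenspace c⁻¹ := by
  intro v hv
  obtain ⟨k, hk⟩ := (Module.End.mem_maxGenEigenspace f c v).1 hv
  refine (Module.End.mem_maxGenEigenspace g c⁻¹ v).2 ⟨k, ?_⟩
  have hfactor : g - c⁻¹ • 1 = (-c⁻¹ • g) * (f - c • 1) := by
    rw [mul_sub, smul_mul_assoc, hgf, mul_smul_comm, mul_one, smul_smul, mul_neg,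
      mul_inv_cancel₀ hc]
    module
  have hcomm : Commute (-c⁻¹ • g) (f - c • 1) :=
    (Commute.sub_right (hgf.trans hfg.symm) ((Commute.one_right g).smul_right c)).smul_left _
  rw [hfactor, hcomm.mul_pow, Module.End.mul_apply, hk, map_zero]

theorem ContinuousLinearMap.tendsto_zero_of_tendsto_apply {α 𝕜 E F : Type*}
    [NontriviallyNormedField 𝕜] [CompleteSpace 𝕜] [NormedAddCommGroup E] [NormedSpace 𝕜 E]
    [FiniteDimensional 𝕜 E] [NormedAddCommGroup F] [NormedSpace 𝕜 F] {l : Filter α}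
    {T : α → E →L[𝕜] F} (hT : ∀ x, Tendsto (fun a => T a x) l (𝓝 0)) :
    Tendsto T l (𝓝 0) := by
  let b := Module.finBasis 𝕜 E
  have hsum : Tendsto (fun a => ∑ i, ‖T a (b i)‖) l (𝓝 0) := by
    simpa using tendsto_finsetSum Finset.univ fun i _ => (hT (b i)).norm
  refine squeeze_zero_norm (fun a => b.opNorm_le (Finset.sum_nonneg fun i _ => norm_nonneg _)
    fun i => Finset.single_le_sum (f := fun i => ‖T a (b i)‖) (fun j _ => norm_nonneg _)
      (Finset.mem_univ i)) ?_
  simpa using hsum.const_mul _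

section Realification

variable {ι : Type*}

def reVec : (ι → ℂ) →ₗ[ℝ] EuclideanSpace ℝ ι where
  toFun v := WithLp.toLp 2 fun i => (v i).re
  map_add' v w := by ext i; simp
  map_smul' c v := by ext i; simp

@[simp]
theorem reVec_apply (v : ι → ℂ) (i : ι) : reVec v i = (v i).re := rfl

theorem reVec_mulVec_map [Fintype ι] [DecidableEq ι] (P : Matrix ι ι ℝ) (v : ι → ℂ) :
    reVec (P.map (↑) *ᵥ v) = toEuclideanLin P (reVec v) := by
  ext i
  simp [Matrix.mulVec, dotProduct, Complex.re_sum]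

theorem ofReal_reVec (v : ι → ℂ) : (fun i => (reVec v i : ℂ)) = (2 : ℂ)⁻¹ • (v + star v) := by
  ext i
  simp [Complex.re_eq_add_conj]
  ring

end Realification

section GenEigSpan

variable {n : ℕ}

def genEigSpanComplex (M : Matrix (Fin n) (Fin n) ℝ) (pred : ℂ → Prop) :
    Submodule ℂ (Fin n → ℂ) :=
  ⨆ μ, ⨆ (_ : pred μ), Module.End.maxGenEigenspace (Matrix.toLin' (M.map ((↑) : ℝ → ℂ))) μ

theorem genEigSpanReal_eq_map_reVec (M : Matrix (Fin n) (Fin n) ℝ) (pred : ℂ → Prop) :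
    genEigSpanReal M pred = ((genEigSpanComplex M pred).restrictScalars ℝ).map reVec := by
  apply le_antisymm
  · refine Submodule.span_le.2 ?_
    rintro x ⟨μ, hμ, v, hv, hre | him⟩
    · refine ⟨v, Submodule.mem_iSup_of_mem μ (Submodule.mem_iSup_of_mem hμ hv), ?_⟩
      ext i; simp [hre]
    · refine ⟨-Complex.I • v, Submodule.mem_iSup_of_mem μ
        (Submodule.mem_iSup_of_mem hμ (Submodule.smul_mem _ _ hv)), ?_⟩
      ext i; simp [him]
  · simp only [genEigSpanComplex, Submodule.restrictScalars_iSup, Submodule.map_iSup]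
    refine iSup₂_le fun μ hμ => ?_
    rintro _ ⟨v, hv, rfl⟩
    exact Submodule.subset_span ⟨μ, hμ, v, hv, Or.inl fun i => rfl⟩

theorem star_mem_maxGenEigenspace_map_ofReal (M : Matrix (Fin n) (Fin n) ℝ) {μ : ℂ}
    {v : Fin n → ℂ} (hv : v ∈ Module.End.maxGenEigenspace (Matrix.toLin' (M.map (↑))) μ) :
    star v ∈ Module.End.maxGenEigenspace (Matrix.toLin' (M.map (↑))) (starRingEnd ℂ μ) := by
  set f := Matrix.toLin' (M.map ((↑) : ℝ → ℂ))
  obtain ⟨k, hk⟩ := (Module.End.mem_maxGenEigenspace f μ v).1 hv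
  have hsemi : Function.Semiconj star ⇑(f - μ • 1) ⇑(f - starRingEnd ℂ μ • 1) := by
    intro w
    ext i
    simp [f, Matrix.mulVec, dotProduct]
  refine (Module.End.mem_maxGenEigenspace f _ _).2 ⟨k, ?_⟩
  rw [Module.End.coe_pow, ← (hsemi.iterate_right k) v, ← Module.End.coe_pow, hk, star_zero]

theorem star_mem_genEigSpanComplex (M : Matrix (Fin n) (Fin n) ℝ) {pred : ℂ → Prop}
    (hpred : ∀ μ, pred μ → pred (starRingEnd ℂ μ)) {v : Fin n → ℂ}
    (hv : v ∈ genEigSpanComplex M pred) : star v ∈ genEigSpanComplex M pred := by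
  suffices h : genEigSpanComplex M pred ≤ (genEigSpanComplex M pred).comap
      (starLinearEquiv ℂ : (Fin n → ℂ) ≃ₗ⋆[ℂ] (Fin n → ℂ)).toLinearMap from h hv
  refine iSup₂_le fun μ hμ w hw => ?_
  exact Submodule.mem_iSup_of_mem _ (Submodule.mem_iSup_of_mem (hpred μ hμ)
    (star_mem_maxGenEigenspace_map_ofReal M hw))

theorem ofReal_mem_genEigSpanComplex (M : Matrix (Fin n) (Fin n) ℝ) {pred : ℂ → Prop}
    (hpred : ∀ μ, pred μ → pred (starRingEnd ℂ μ)) {x : EuclideanSpace ℝ (Fin n)}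
    (hx : x ∈ genEigSpanReal M pred) : (fun i => (x i : ℂ)) ∈ genEigSpanComplex M pred := by
  rw [genEigSpanReal_eq_map_reVec] at hx
  obtain ⟨v, hv, rfl⟩ := hx
  rw [ofReal_reVec]
  exact Submodule.smul_mem _ _ (Submodule.add_mem _ hv (star_mem_genEigSpanComplex M hpred hv))

theorem disjoint_genEigSpanReal (M : Matrix (Fin n) (Fin n) ℝ) {pred pred' : ℂ → Prop}
    (hpred : ∀ μ, pred μ → pred (starRingEnd ℂ μ))
    (hpred' : ∀ μ, pred' μ → pred' (starRingEnd ℂ μ)) (hdisj : ∀ μ, pred μ → ¬ pred' μ) :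
    Disjoint (genEigSpanReal M pred) (genEigSpanReal M pred') := by
  have hC : Disjoint (genEigSpanComplex M pred) (genEigSpanComplex M pred') :=
    (Module.End.independent_maxGenEigenspace _).disjoint_biSup_biSup
      (s := {μ | pred μ}) (t := {μ | pred' μ}) (Set.disjoint_left.2 hdisj)
  refine Submodule.disjoint_def.2 fun x hx hx' => ?_
  have h0 := Submodule.disjoint_def.1 hC _ (ofReal_mem_genEigSpanComplex M hpred hx)
    (ofReal_mem_genEigSpanComplex M hpred' hx')
  ext i
  simpa using congrFun h0 i

theorem toLin'_map_ofReal_mul (P M : Matrix (Fin n) (Fin n) ℝ) :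
    Matrix.toLin' ((P * M).map ((↑) : ℝ → ℂ)) =
      Matrix.toLin' (P.map (↑)) * Matrix.toLin' (M.map (↑)) := by
  rw [show (P * M).map ((↑) : ℝ → ℂ) = P.map (↑) * M.map (↑) from
    Matrix.map_mul (f := Complex.ofRealHom), Matrix.toLin'_mul]
  rfl

theorem toEuclideanLin_mem_genEigSpanReal {M P : Matrix (Fin n) (Fin n) ℝ} (hMP : Commute M P)
    {pred : ℂ → Prop} {x : EuclideanSpace ℝ (Fin n)} (hx : x ∈ genEigSpanReal M pred) :
    toEuclideanLin P x ∈ genEigSpanReal M pred := by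
  rw [genEigSpanReal_eq_map_reVec] at hx ⊢
  obtain ⟨v, hv, rfl⟩ := hx
  refine ⟨P.map (↑) *ᵥ v, ?_, reVec_mulVec_map P v⟩
  have hcomm : Commute (Matrix.toLin' (M.map ((↑) : ℝ → ℂ))) (Matrix.toLin' (P.map (↑))) := by
    rw [Commute, SemiconjBy, ← toLin'_map_ofReal_mul, ← toLin'_map_ofReal_mul, hMP.eq]
  suffices h : genEigSpanComplex M pred ≤
      (genEigSpanComplex M pred).comap (Matrix.toLin' (P.map (↑))) from h hv
  exact iSup₂_le fun μ hμ w hw => Submodule.mem_iSup_of_mem μ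
    (Submodule.mem_iSup_of_mem hμ (Module.End.mapsTo_maxGenEigenspace_of_comm hcomm μ hw))

theorem genEigSpanReal_le_stableSubmodule {M P : Matrix (Fin n) (Fin n) ℝ} (hMP : M * P = 1)
    (hPM : P * M = 1) :
    genEigSpanReal M (fun μ => 1 < ‖μ‖) ≤ Module.End.stableSubmodule (toEuclideanLin P) := by
  rw [genEigSpanReal_eq_map_reVec]
  rintro _ ⟨v, hv, rfl⟩
  refine Module.End.mem_stableSubmodule_of_semiconj (g := Matrix.toLin' (P.map (↑)))
    (LinearMap.continuous_of_finiteDimensional reVec) (map_zero _)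
    (fun v => reVec_mulVec_map P v) ?_
  have hinv : ∀ {A B : Matrix (Fin n) (Fin n) ℝ}, A * B = 1 →
      Matrix.toLin' (A.map ((↑) : ℝ → ℂ)) * Matrix.toLin' (B.map (↑)) = 1 := by
    intro A B h
    rw [← toLin'_map_ofReal_mul, h, Matrix.map_one _ Complex.ofReal_zero Complex.ofReal_one,
      Matrix.toLin'_one]
    rfl
  refine (iSup₂_le (fun μ hμ => ?_) : genEigSpanComplex M _ ≤ _) hv
  have hμ₀ : μ ≠ 0 := norm_pos_iff.1 (one_pos.trans hμ)
  exact (Module.End.maxGenEigenspace_le_maxGenEigenspace_inv (hinv hMP) (hinv hPM) hμ₀).trans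
    (Module.End.maxGenEigenspace_le_stableSubmodule _
      (by rw [norm_inv]; exact inv_lt_one_of_one_lt₀ hμ))

end GenEigSpan

theorem Module.End.eventually_norm_pow_apply_lt {𝕜 V : Type*} [NontriviallyNormedField 𝕜]
    [CompleteSpace 𝕜] [NormedAddCommGroup V] [NormedSpace 𝕜 V] {g : Module.End 𝕜 V}
    {F : Submodule 𝕜 V} [FiniteDimensional 𝕜 F] (hF : F ≤ g.stableSubmodule) (q : ℝ)
    {s : ℝ} (hs : 0 < s) : ∀ᶠ m in atTop, ∀ f ∈ F, ‖f‖ < q → ‖(g ^ m) f‖ < s := by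
  let T : ℕ → F →L[𝕜] V := fun m => ((g ^ m) ∘ₗ F.subtype).toContinuousLinearMap
  have hT : Tendsto T atTop (𝓝 0) :=
    ContinuousLinearMap.tendsto_zero_of_tendsto_apply fun f => hF f.2
  filter_upwards [(hT.norm.mul_const q).eventually (gt_mem_nhds (by simpa using hs))]
    with m hm f hf hfq
  calc ‖(g ^ m) f‖ = ‖T m ⟨f, hf⟩‖ := rfl
    _ ≤ ‖T m‖ * q := ((T m).le_opNorm _).trans (by gcongr; exact hfq.le)
    _ < s := hm

theorem exists_norm_lt_and_lt_norm_apply_of_mem_Qset {n : ℕ}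
    {E F : Submodule ℝ (EuclideanSpace ℝ (Fin n))} (hEF : Disjoint E F)
    {L : Module.End ℝ (EuclideanSpace ℝ (Fin n))} (hLE : ∀ x ∈ E, L x ∈ E)
    (hLF : ∀ x ∈ F, L x ∈ F) {p q s : ℝ} {x : EuclideanSpace ℝ (Fin n)}
    (hx : x ∈ Qset E F p q s) (hLx : L x ∈ Qset E F p q s) :
    ∃ f ∈ F, ‖f‖ < q ∧ s < ‖L f‖ := by
  obtain ⟨e, he, f, hf, rfl, -, -, hfq⟩ := hx
  obtain ⟨e', he', f', hf', hdecomp, -, hsf', -⟩ := hLx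
  -- uniqueness of the `E ⊕ F` decomposition of `L (e + f)`
  have hdiff : L f - f' = e' - L e := by
    rw [sub_eq_sub_iff_add_eq_add, add_comm, ← map_add, hdecomp]
  have hf'eq : f' = L f := by
    refine (sub_eq_zero.1 (Submodule.disjoint_def.1 hEF _ ?_ (F.sub_mem (hLF f hf) hf'))).symm
    rw [hdiff]
    exact E.sub_mem he' (hLE e he)
  exact ⟨f, hf, hfq, hf'eq ▸ hsf'⟩

theorem Int.finite_and_ncard_le_of_sub_lt {S : Set ℤ} {N : ℕ}
    (hS : ∀ j ∈ S, ∀ j' ∈ S, j ≤ j' → j' - j < N) : S.Finite ∧ S.ncard ≤ 2 * N := by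
  rcases S.eq_empty_or_nonempty with rfl | ⟨j₀, hj₀⟩
  · simp
  have hsub : S ⊆ Set.Ioo (j₀ - N) (j₀ + N) := by
    intro j hj
    rcases le_total j j₀ with h | h
    · have := hS j hj j₀ hj₀ h; constructor <;> omega
    · have := hS j₀ hj₀ j hj h; constructor <;> omega
  refine ⟨(Set.finite_Ioo _ _).subset hsub,
    (Set.ncard_le_ncard hsub (Set.finite_Ioo _ _)).trans ?_⟩
  rw [← Finset.coe_Ioo, Set.ncard_coe_finset, Int.card_Ioo]
  omega

theorem glAct_mul {n : ℕ} (A C : Matrix.GeneralLinearGroup (Fin n) ℝ) :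
    glAct (A * C) = glAct A * glAct C := by
  ext x : 1
  simp [glAct]

theorem glAct_pow {n : ℕ} (A : Matrix.GeneralLinearGroup (Fin n) ℝ) (m : ℕ) :
    glAct (A ^ m) = glAct A ^ m := by
  induction m with
  | zero => ext x : 1; simp [glAct]
  | succ m ih => rw [pow_succ, glAct_mul, ih, pow_succ]

theorem orbit_hits_Q_boundedly_general {n : ℕ}
    (B : Matrix.GeneralLinearGroup (Fin n) ℝ)
    (E F : Submodule ℝ (EuclideanSpace ℝ (Fin n)))
    (hE : E = genEigSpanReal (B : Matrix (Fin n) (Fin n) ℝ) (fun μ => ‖μ‖ ≤ 1))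
    (hF : F = genEigSpanReal (B : Matrix (Fin n) (Fin n) ℝ) (fun μ => 1 < ‖μ‖))
    (p q s : ℝ) (hs : 0 < s)
    (T : Set (EuclideanSpace ℝ (Fin n))) (hT : T ⊆ Qset E F p q s) :
    ∃ K : ℕ, ∀ ξ : EuclideanSpace ℝ (Fin n),
      ({j : ℤ | glAct (B ^ (-j)) ξ ∈ T}).Finite ∧
      ({j : ℤ | glAct (B ^ (-j)) ξ ∈ T}).ncard ≤ K := by
  subst hE hF
  set A := glAct B⁻¹
  have hcomm : Commute (B : Matrix (Fin n) (Fin n) ℝ) ↑B⁻¹ := B.mul_inv.trans B.inv_mul.symm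
  have hA : ∀ pred (m : ℕ), ∀ x ∈ genEigSpanReal (↑B) pred,
      (A ^ m) x ∈ genEigSpanReal (↑B) pred :=
    fun _ m x hx => by
      rw [Module.End.coe_pow]
      exact Set.MapsTo.iterate (fun y hy => toEuclideanLin_mem_genEigSpanReal hcomm hy) m hx
  have hEF := disjoint_genEigSpanReal (B : Matrix (Fin n) (Fin n) ℝ) (pred := (‖·‖ ≤ 1))
    (pred' := (1 < ‖·‖)) (by simp) (by simp) fun μ h h' => h'.not_ge h
  obtain ⟨N, hN⟩ := eventually_atTop.1 <| Module.End.eventually_norm_pow_apply_lt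
    (genEigSpanReal_le_stableSubmodule B.mul_inv B.inv_mul) q hs
  refine ⟨2 * N, fun ξ => Int.finite_and_ncard_le_of_sub_lt fun j hj j' hj' hjj' => ?_⟩
  obtain ⟨m, rfl⟩ := Int.le.dest hjj'
  by_contra! hm
  have horbit : glAct (B ^ (-(j + m))) ξ = (A ^ m) (glAct (B ^ (-j)) ξ) := by
    rw [neg_add_rev, _root_.zpow_add, _root_.zpow_neg, zpow_natCast, ← inv_pow, glAct_mul,
      glAct_pow]
    rfl
  obtain ⟨f, hf, hfq, hsf⟩ := exists_norm_lt_and_lt_norm_apply_of_mem_Qset hEF (hA _ m) (hA _ m)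
    (hT hj) (horbit ▸ hT hj')
  exact (hN m (by omega) f hf hfq).not_gt hsf

/-- If `|det B| > 1`, `F` (resp. `E`) is the real span of generalized eigenspaces for
eigenvalues of modulus `> 1` (resp. `≤ 1`), and `T ⊆ Q(p,q,s)`, then there is `K ∈ ℕ`
such that every orbit `{B^{-j} ξ}_{j∈ℤ}` hits `T` at most `K` times. -/
theorem orbit_hits_Q_boundedly {n : ℕ}
    (B : Matrix.GeneralLinearGroup (Fin n) ℝ)
    (hdet : 1 < |Matrix.det (B : Matrix (Fin n) (Fin n) ℝ)|)
    (E F : Submodule ℝ (EuclideanSpace ℝ (Fin n)))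
    (hE : E = genEigSpanReal (B : Matrix (Fin n) (Fin n) ℝ) (fun μ => ‖μ‖ ≤ 1))
    (hF : F = genEigSpanReal (B : Matrix (Fin n) (Fin n) ℝ) (fun μ => 1 < ‖μ‖))
    (p q s : ℝ) (hp : 0 < p) (hq : 0 < q) (hs : 0 < s)
    (T : Set (EuclideanSpace ℝ (Fin n))) (hT : T ⊆ Qset E F p q s) :
    ∃ K : ℕ, ∀ ξ : EuclideanSpace ℝ (Fin n),
      ({j : ℤ | glAct (B ^ (-j)) ξ ∈ T}).Finite ∧
      ({j : ℤ | glAct (B ^ (-j)) ξ ∈ T}).ncard ≤ K :=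
  orbit_hits_Q_boundedly_general B E F hE hF p q s hs T hT

end
end

section
/- If the lattice counting estimate holds for a pair (A,Γ) with radius r₀ > 0, then it holds for every radius r > 0 (with a constant depending on r). That is, if ∃C₀ with #(Γ ∩ A^j(B(0,r₀))) ≤ C₀·max(1,|det A|^j) for all j ∈ ℤ, then for every r > 0 there is C(r) with #(Γ ∩ A^j(B(0,r))) ≤ C(r)·max(1,|det A|^j) for all j ∈ ℤ. -/
/-!
Every lattice point of `Γ ∩ Aʲ(B(0,r))` lies in one of the sets `Γ ∩ Aʲ(B(x,r₀/2))`, where the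
balls `B(x,r₀/2)`, `x ∈ t`, are a fixed finite cover of `B(0,r)`. Subtracting one lattice point
of such a piece maps it injectively into `Γ ∩ Aʲ(B(0,r₀))`, because `Γ` is a group, `Aʲ` is
additive and `B(x,r₀/2) - B(x,r₀/2) = B(0,r₀)`. Hence the count for radius `r` is at most `#t`
times the count for radius `r₀`, uniformly in `j`.
-/

open Matrix Set

noncomputable section

def IsFullLattice {n : ℕ} (Γ : Set (EuclideanSpace ℝ (Fin n))) : Prop :=
  ∃ b : Module.Basis (Fin n) ℝ (EuclideanSpace ℝ (Fin n)),
    Γ = ((Submodule.span ℤ (Set.range ⇑b) :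
      Submodule ℤ (EuclideanSpace ℝ (Fin n))) : Set (EuclideanSpace ℝ (Fin n)))

open scoped Pointwise

section Counting

variable {E F S G : Type*} [AddGroup E] [AddGroup F] [SetLike S F] [AddSubgroupClass S F]
  [FunLike G E F] [AddMonoidHomClass G E F] (L : S) (M : G)

theorem encard_inter_image_le_of_sub_subset {v w : Set E} (hvw : v - v ⊆ w) :
    ((L : Set F) ∩ M '' v).encard ≤ ((L : Set F) ∩ M '' w).encard := by
  rcases ((L : Set F) ∩ M '' v).eq_empty_or_nonempty with hempty | ⟨_, hγ₀, u₀, hu₀, rfl⟩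
  · simp [hempty]
  refine encard_le_encard_of_injOn (f := (· - M u₀)) ?_ sub_left_injective.injOn
  rintro _ ⟨hγ, u, hu, rfl⟩
  exact ⟨sub_mem hγ hγ₀, u - u₀, hvw (sub_mem_sub hu hu₀), map_sub M u u₀⟩

theorem encard_inter_image_le_card_mul {ι : Type*} {s w : Set E} (t : Finset ι) (v : ι → Set E)
    (hs : s ⊆ ⋃ i ∈ t, v i) (hvw : ∀ i ∈ t, v i - v i ⊆ w) :
    ((L : Set F) ∩ M '' s).encard ≤ t.card * ((L : Set F) ∩ M '' w).encard := by
  have hcover : (L : Set F) ∩ M '' s ⊆ ⋃ i ∈ t, (L : Set F) ∩ M '' v i := by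
    rintro _ ⟨hγ, u, hu, rfl⟩
    obtain ⟨i, hi, hui⟩ := mem_iUnion₂.1 (hs hu)
    exact mem_iUnion₂.2 ⟨i, hi, hγ, u, hui, rfl⟩
  calc ((L : Set F) ∩ M '' s).encard
      ≤ (⋃ i ∈ t, (L : Set F) ∩ M '' v i).encard := encard_le_encard hcover
    _ ≤ ∑ i ∈ t, ((L : Set F) ∩ M '' v i).encard := t.set_encard_biUnion_le _
    _ ≤ ∑ _i ∈ t, ((L : Set F) ∩ M '' w).encard :=
        Finset.sum_le_sum fun i hi => encard_inter_image_le_of_sub_subset L M (hvw i hi)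
    _ = t.card * ((L : Set F) ∩ M '' w).encard := by rw [Finset.sum_const, nsmul_eq_mul]

theorem ncard_inter_image_le_card_mul {ι : Type*} {s w : Set E} (t : Finset ι) (v : ι → Set E)
    (hs : s ⊆ ⋃ i ∈ t, v i) (hvw : ∀ i ∈ t, v i - v i ⊆ w)
    (hs_fin : ((L : Set F) ∩ M '' s).Finite) (hw_fin : ((L : Set F) ∩ M '' w).Finite) :
    ((L : Set F) ∩ M '' s).ncard ≤ t.card * ((L : Set F) ∩ M '' w).ncard := by
  have h := encard_inter_image_le_card_mul L M t v hs hvw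
  rw [← hs_fin.cast_ncard_eq, ← hw_fin.cast_ncard_eq] at h
  exact_mod_cast h

end Counting

theorem lattice_counting_radius_independent_general {n : ℕ}
    (A : Matrix.GeneralLinearGroup (Fin n) ℝ)
    (Γ : Set (EuclideanSpace ℝ (Fin n))) (hΓ : IsFullLattice Γ)
    (r₀ : ℝ) (hr₀ : 0 < r₀) (C₀ : ℝ)
    (h : ∀ j : ℤ, ((Γ ∩ glAct (A ^ j) '' Metric.ball 0 r₀).ncard : ℝ) ≤
      C₀ * max 1 (|Matrix.det (A : Matrix (Fin n) (Fin n) ℝ)| ^ j)) :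
    ∀ r > (0 : ℝ), ∃ C : ℝ, ∀ j : ℤ,
      ((Γ ∩ glAct (A ^ j) '' Metric.ball 0 r).ncard : ℝ) ≤
        C * max 1 (|Matrix.det (A : Matrix (Fin n) (Fin n) ℝ)| ^ j) := by
  intro r _
  obtain ⟨b, rfl⟩ := hΓ
  obtain ⟨t, -, hcover⟩ := (isCompact_closedBall (0 : EuclideanSpace ℝ (Fin n)) r).elim_nhds_subcover
    (fun x => Metric.ball x (r₀ / 2)) fun x _ => Metric.ball_mem_nhds x (half_pos hr₀)
  refine ⟨t.card * C₀, fun j => ?_⟩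
  have hfin (ρ : ℝ) : ((Submodule.span ℤ (range b) : Set _) ∩ glAct (A ^ j) ''
      Metric.ball 0 ρ).Finite := by
    rw [inter_comm]
    exact ZSpan.setFinite_inter b <|
      (glAct (A ^ j)).toContinuousLinearMap.lipschitz.isBounded_image Metric.isBounded_ball
  have hcount := ncard_inter_image_le_card_mul (Submodule.span ℤ (range b)) (glAct (A ^ j)) t
    (fun x => Metric.ball x (r₀ / 2)) (Metric.ball_subset_closedBall.trans hcover)
    (fun x _ => by rw [ball_sub_ball (half_pos hr₀) (half_pos hr₀), sub_self, add_halves])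
    (hfin r) (hfin r₀)
  calc _ ≤ (t.card : ℝ) * _ := by exact_mod_cast hcount
    _ ≤ t.card * (C₀ * _) := mul_le_mul_of_nonneg_left (h j) (Nat.cast_nonneg _)
    _ = _ := (mul_assoc _ _ _).symm

/-- If the lattice counting estimate holds for `(A,Γ)` with some radius `r₀ > 0`, then
it holds for every radius `r > 0` (with a constant depending on `r`). -/
theorem lattice_counting_radius_independent {n : ℕ}
    (A : Matrix.GeneralLinearGroup (Fin n) ℝ)
    (hdet : 1 < |Matrix.det (A : Matrix (Fin n) (Fin n) ℝ)|)
    (Γ : Set (EuclideanSpace ℝ (Fin n))) (hΓ : IsFullLattice Γ)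
    (r₀ : ℝ) (hr₀ : 0 < r₀) (C₀ : ℝ)
    (h : ∀ j : ℤ, ((Γ ∩ glAct (A ^ j) '' Metric.ball 0 r₀).ncard : ℝ) ≤
      C₀ * max 1 (|Matrix.det (A : Matrix (Fin n) (Fin n) ℝ)| ^ j)) :
    ∀ r > (0 : ℝ), ∃ C : ℝ, ∀ j : ℤ,
      ((Γ ∩ glAct (A ^ j) '' Metric.ball 0 r).ncard : ℝ) ≤
        C * max 1 (|Matrix.det (A : Matrix (Fin n) (Fin n) ℝ)| ^ j) :=
  lattice_counting_radius_independent_general A Γ hΓ r₀ hr₀ C₀ h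

end
end
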